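/- Let m ≥ 4 be even and set μ_i = (1, m-2)·π^i and π_j = π^j where π = (0,1,…,m-1) is the m-cycle on ℤ_m (composition left-to-right). Then the permutation μ_0 · π_2 = (1, m-2)·π^2 is a single m-cycle, namely (0, 2, 4, …, m-2, 3, 5, 7, …, m-1, 1). -/

import Mathlib

/-!
Write `σ = (1, m-2)·π²`, so `σ x = x + 2` except that `σ 1 = 0` and `σ (m-2) = 3`.
Starting from `0`, the orbit of `σ` runs through the even residues `0, 2, …, m-2`, jumps to `3`,
runs through the odd residues `3, 5, …, m-1`, wraps around to `1` and returns to `0`; since `m` is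
even this visits every residue, so `σ` is one cycle through all of `ℤ_m`.
-/

open Equiv Finset

namespace Equiv.Perm

variable {α : Type*} {f : Perm α}

theorem forall_apply_ne_self_of_forall_sameCycle [Nontrivial α] {x : α}
    (h : ∀ y, f.SameCycle x y) (y : α) : f y ≠ y := by
  obtain ⟨z, hzy⟩ := exists_ne y
  intro hy
  exact hzy (((h z).symm.trans (h y)).eq_of_right hy)

theorem isCycle_of_forall_sameCycle [Nontrivial α] {x : α} (h : ∀ y, f.SameCycle x y) :
    f.IsCycle :=
  ⟨x, forall_apply_ne_self_of_forall_sameCycle h x, fun y _ => h y⟩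

theorem support_eq_univ_of_forall_sameCycle [Fintype α] [DecidableEq α] [Nontrivial α] {x : α}
    (h : ∀ y, f.SameCycle x y) : f.support = univ :=
  eq_univ_of_forall fun y => mem_support.2 (forall_apply_ne_self_of_forall_sameCycle h y)

end Equiv.Perm

theorem Fin.val_pow_apply_eq_add_mod {m : ℕ} {π : Perm (Fin m)}
    (hπ : ∀ x : Fin m, (π x).val = (x.val + 1) % m) (k : ℕ) (x : Fin m) :
    ((π ^ k) x).val = (x.val + k) % m := by
  induction k with
  | zero => simp [Nat.mod_eq_of_lt x.isLt]
  | succ k ih => rw [pow_succ', Perm.mul_apply, hπ, ih, Nat.mod_add_mod, add_assoc]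

theorem Nat.add_mod_eq_ite_of_lt {a b m : ℕ} (ha : a < m) (hb : b < m) :
    (a + b) % m = if m ≤ a + b then a + b - m else a + b := by
  rw [Nat.add_mod_eq_ite, Nat.mod_eq_of_lt ha, Nat.mod_eq_of_lt hb]

/-- The `k`-th term of `0, 2, 4, …, m-2, 3, 5, …, m-1, 1`. -/
def evensThenOdds (m k : ℕ) : ℕ :=
  if k < m / 2 then 2 * k else if k < m - 1 then 2 * k + 3 - m else 1

theorem exists_evensThenOdds_eq {m y : ℕ} (heven : Even m) (hy : y < m) :
    ∃ k < m, evensThenOdds m k = y := by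
  obtain ⟨n, rfl⟩ := heven
  refine ⟨if y % 2 = 0 then y / 2 else if y = 1 then n + n - 1 else (y + n + n - 3) / 2,
    by split_ifs <;> omega, ?_⟩
  unfold evensThenOdds
  split_ifs <;> omega

theorem val_swap_trans_shift_sq_apply {m : ℕ} (hm : 4 ≤ m) {π : Perm (Fin m)}
    (hπ : ∀ x : Fin m, (π x).val = (x.val + 1) % m) {a b : Fin m} (ha : a.val = 1)
    (hb : b.val = m - 2) (x : Fin m) :
    ((swap a b).trans (π ^ 2) x).val =
      if x.val = 1 then 0 else if x.val = m - 2 then 3 else if x.val = m - 1 then 1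
      else x.val + 2 := by
  rw [trans_apply, Fin.val_pow_apply_eq_add_mod hπ,
    Nat.add_mod_eq_ite_of_lt (Fin.isLt _) (by omega), swap_apply_def]
  split_ifs <;> simp_all [Fin.ext_iff] <;> omega

theorem val_pow_apply_eq_evensThenOdds {m : ℕ} (hm : 4 ≤ m) (heven : Even m) {σ : Perm (Fin m)}
    (hσ : ∀ x : Fin m, (σ x).val =
      if x.val = 1 then 0 else if x.val = m - 2 then 3 else if x.val = m - 1 then 1
      else x.val + 2)
    {x : Fin m} (hx : x.val = 0) {k : ℕ} (hk : k < m) :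
    ((σ ^ k) x).val = evensThenOdds m k := by
  obtain ⟨n, rfl⟩ := heven
  induction k with
  | zero => simp [evensThenOdds, hx]; omega
  | succ k ih =>
    rw [pow_succ', Perm.mul_apply, hσ, ih (by omega)]
    unfold evensThenOdds
    split_ifs <;> omega

/-- Let `m ≥ 4` be even and `π = (0,1,…,m-1)` the cyclic shift on
`ℤ_m`.  The permutation `μ₀·π₂ = (1, m-2)·π²` (transposition first, then `π²`,
composition left-to-right) is a single `m`-cycle. -/
theorem swap_mul_shift_sq_isCycle (m : ℕ) (hm : 4 ≤ m) (heven : Even m)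
    (π : Equiv.Perm (Fin m)) (hπ : ∀ x : Fin m, (π x).val = (x.val + 1) % m) :
    Equiv.Perm.IsCycle
      ((Equiv.swap (⟨1, by omega⟩ : Fin m) ⟨m - 2, by omega⟩).trans (π ^ 2)) ∧
    Equiv.Perm.support
      ((Equiv.swap (⟨1, by omega⟩ : Fin m) ⟨m - 2, by omega⟩).trans (π ^ 2)) =
      Finset.univ := by
  have : Nontrivial (Fin m) := Fin.nontrivial_iff_two_le.2 (by omega)
  set σ : Perm (Fin m) := (swap (⟨1, by omega⟩ : Fin m) ⟨m - 2, by omega⟩).trans (π ^ 2)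
  have hreach : ∀ y : Fin m, σ.SameCycle ⟨0, by omega⟩ y := by
    intro y
    obtain ⟨k, hk, hky⟩ := exists_evensThenOdds_eq heven y.isLt
    have hσk : (σ ^ k) ⟨0, by omega⟩ = y :=
      Fin.ext (hky ▸ val_pow_apply_eq_evensThenOdds hm heven
        (val_swap_trans_shift_sq_apply hm hπ rfl rfl) rfl hk)
    exact hσk ▸ Perm.sameCycle_pow_right.2 (Perm.SameCycle.refl σ _)
  exact ⟨Perm.isCycle_of_forall_sameCycle hreach, Perm.support_eq_univ_of_forall_sameCycle hreach⟩
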